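/- Infusion and reverse infusion are mutually inverse: for standard tableaux T of straight shape λ and U of skew shape ν/λ, revinfusion(infusion(T,U)) = (T,U) and infusion(revinfusion(T,U)) = (T,U). -/

import Mathlib

open scoped Classical

noncomputable section

variable {Λ : Type} [Fintype Λ] [PartialOrder Λ]

/-- The set of boxes occupied by a (partial) filling. -/
def shape (T : Λ → Option ℕ) : Finset Λ :=
  Finset.univ.filter fun x => (T x).isSome

/-- Lower order ideal (straight shape). -/
def IsLowerIdeal (S : Finset Λ) : Prop := ∀ x ∈ S, ∀ y, y ≤ x → y ∈ S

/-- `T` is a standard filling of a skew shape: its domain is a difference of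
nested lower order ideals, its labels are exactly `1,…,m` each used once, and
labels strictly increase along the order of `Λ`. -/
def IsStandard (T : Λ → Option ℕ) : Prop :=
  (∃ lam : Finset Λ, IsLowerIdeal lam ∧ Disjoint lam (shape T) ∧
    IsLowerIdeal (lam ∪ shape T)) ∧
  (∀ i : ℕ, 1 ≤ i → i ≤ (shape T).card → ∃! x : Λ, T x = some i) ∧
  (∀ x ∈ shape T, ∃ i : ℕ, T x = some i ∧ 1 ≤ i ∧ i ≤ (shape T).card) ∧
  (∀ x y : Λ, x ∈ shape T → y ∈ shape T → x < y →
    ∀ i j : ℕ, T x = some i → T y = some j → i < j)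

def lab (T : Λ → Option ℕ) (x : Λ) : ℕ := (T x).getD 0

def pickMinBy (f : Λ → ℕ) (s : Finset Λ) (h : s.Nonempty) : Λ :=
  (Finset.exists_min_image s f h).choose

def pickMaxBy (f : Λ → ℕ) (s : Finset Λ) (h : s.Nonempty) : Λ :=
  (Finset.exists_max_image s f h).choose

/-- One full jeu de taquin slide into the vacant box `x`: repeatedly move into the
vacancy the smallest label among the boxes covering it. -/
def slideAux : ℕ → (Λ → Option ℕ) → Λ → (Λ → Option ℕ)
  | 0, T, _ => T
  | n+1, T, x =>
    let cands := (shape T).filter fun y => x ⋖ y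
    if h : cands.Nonempty then
      let y := pickMinBy (lab T) cands h
      slideAux n (fun z => if z = x then T y else if z = y then none else T z) y
    else T

/-- One full reverse jeu de taquin slide into the vacant box `x`: repeatedly move
into the vacancy the largest label among the boxes it covers. -/
def revSlideAux : ℕ → (Λ → Option ℕ) → Λ → (Λ → Option ℕ)
  | 0, T, _ => T
  | n+1, T, x =>
    let cands := (shape T).filter fun y => y ⋖ x
    if h : cands.Nonempty then
      let y := pickMaxBy (lab T) cands h
      revSlideAux n (fun z => if z = x then T y else if z = y then none else T z) y
    else T

/-- `x` is an admissible box for an (inner) jeu de taquin slide on `T`: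
vacant, below some box of `T`, and maximal such. -/
def InnerAdmissible (T : Λ → Option ℕ) (x : Λ) : Prop :=
  T x = none ∧ (∃ y ∈ shape T, x < y) ∧
  ∀ z : Λ, T z = none → (∃ y ∈ shape T, z < y) → ¬ x < z

/-- `x` is an admissible box for a reverse jeu de taquin slide on `T`:
vacant, above some box of `T`, and minimal such. -/
def OuterAdmissible (T : Λ → Option ℕ) (x : Λ) : Prop :=
  T x = none ∧ (∃ y ∈ shape T, y < x) ∧
  ∀ z : Λ, T z = none → (∃ y ∈ shape T, y < z) → ¬ z < x

def jdt (x : Λ) (T : Λ → Option ℕ) : Λ → Option ℕ :=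
  if InnerAdmissible T x then slideAux (Fintype.card Λ) T x else T

def revjdt (x : Λ) (T : Λ → Option ℕ) : Λ → Option ℕ :=
  if OuterAdmissible T x then revSlideAux (Fintype.card Λ) T x else T

/-- Apply a sequence of slides (`true`) and reverse slides (`false`) at the
given boxes. -/
def applySeq (s : List (Bool × Λ)) (T : Λ → Option ℕ) : Λ → Option ℕ :=
  s.foldl (fun T p => if p.1 then jdt p.2 T else revjdt p.2 T) T

/-- Dual equivalence: same shape, and every common sequence of slides and
reverse slides produces tableaux of the same shape. -/
def DualEquiv (T U : Λ → Option ℕ) : Prop :=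
  shape T = shape U ∧
  ∀ s : List (Bool × Λ), shape (applySeq s T) = shape (applySeq s U)

/-- `mu` extends `lam`: `lam ∪ mu` is a straight shape containing `lam` and `mu`
as complementary down-closed and up-closed subsets. -/
def ShapeExtends (mu lam : Finset Λ) : Prop :=
  Disjoint lam mu ∧ IsLowerIdeal (lam ∪ mu) ∧
  (∀ x ∈ lam, ∀ y ∈ lam ∪ mu, y ≤ x → y ∈ lam) ∧
  (∀ x ∈ mu, ∀ y ∈ lam ∪ mu, x ≤ y → y ∈ mu)

/-- `A ⨿ B`: keep the labels of `A` and shift the labels of `B` up by `|shape A|`. -/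
def tabConcat (A B : Λ → Option ℕ) : Λ → Option ℕ := fun x =>
  match A x with
  | some i => some i
  | none => (B x).map (· + (shape A).card)

/-- One step of infusion on a triple `(T, U, V)`: remove the largest label of `T`
at its box `x`, slide `U` into `x`, and record the removed label at the vacated
hole in `V`. -/
def infusionStep :
    ((Λ → Option ℕ) × (Λ → Option ℕ) × (Λ → Option ℕ)) →
    ((Λ → Option ℕ) × (Λ → Option ℕ) × (Λ → Option ℕ)) := fun p =>
  let T := p.1; let U := p.2.1; let V := p.2.2
  if h : (shape T).Nonempty then
    let x := pickMaxBy (lab T) (shape T) h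
    let T' := fun z => if z = x then none else T z
    let U' := slideAux (Fintype.card Λ) U x
    let hole := if h2 : (shape U \ shape U').Nonempty then h2.choose else x
    let V' := fun z => if z = hole then T x else V z
    (T', U', V')
  else p

/-- `infusion (T,U)` for `U` extending `T`: slide `U` through the boxes of `T` in
decreasing label order; first output is the slid `U`, second records `T`'s labels
in the vacated holes. -/
def infusion (T U : Λ → Option ℕ) : (Λ → Option ℕ) × (Λ → Option ℕ) :=
  let r := infusionStep^[Fintype.card Λ] (T, U, fun _ => none)
  (r.2.1, r.2.2)

/-- One step of reverse infusion: remove the smallest label of `U` at its box `x`,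
reverse-slide `T` into `x`, and record the removed label at the vacated hole. -/
def revinfusionStep :
    ((Λ → Option ℕ) × (Λ → Option ℕ) × (Λ → Option ℕ)) →
    ((Λ → Option ℕ) × (Λ → Option ℕ) × (Λ → Option ℕ)) := fun p =>
  let T := p.1; let U := p.2.1; let V := p.2.2
  if h : (shape U).Nonempty then
    let x := pickMinBy (lab U) (shape U) h
    let U' := fun z => if z = x then none else U z
    let T' := revSlideAux (Fintype.card Λ) T x
    let hole := if h2 : (shape T \ shape T').Nonempty then h2.choose else x
    let V' := fun z => if z = hole then U x else V z
    (T', U', V')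
  else p

/-- `revinfusion (T,U)`: reverse-slide `T` through the boxes of `U` in increasing
label order; first output records `U`'s labels in the vacated holes (a straight
tableau), second is the migrated `T`. -/
def revinfusion (T U : Λ → Option ℕ) : (Λ → Option ℕ) × (Λ → Option ℕ) :=
  let r := revinfusionStep^[Fintype.card Λ] (T, U, fun _ => none)
  (r.2.2, r.1)

def applyJdtSeq (l : List Λ) (T : Λ → Option ℕ) : Λ → Option ℕ :=
  l.foldl (fun T x => jdt x T) T

/-- `V` is a rectification of `T`: obtained from `T` by jeu de taquin slides and of
straight shape. -/
def IsRectificationOf (V T : Λ → Option ℕ) : Prop :=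
  (∃ l : List Λ, applyJdtSeq l T = V) ∧ IsLowerIdeal (shape V)

/-- The rectification of `T` (any choice of rectifying slide sequence). -/
def rect (T : Λ → Option ℕ) : Λ → Option ℕ :=
  if h : ∃ l : List Λ, IsLowerIdeal (shape (applyJdtSeq l T)) then
    applyJdtSeq h.choose T else T

/-- Sch\"utzenberger's `Δ`: delete the entry `1` at the minimum `b`, decrease all
labels by one, and slide into `b`. -/
def delta (b : Λ) (T : Λ → Option ℕ) : Λ → Option ℕ :=
  slideAux (Fintype.card Λ) (fun x => if x = b then none else (T x).map (· - 1)) b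

/-- Evacuation: the label of `x` is `|λ|+1-i` where `x ∈ shape (Δ^[i-1] T) \ shape (Δ^[i] T)`. -/
def evac (b : Λ) (T : Λ → Option ℕ) : Λ → Option ℕ := fun x =>
  if x ∈ shape T then
    some ((shape T).card + 1 -
      ((Finset.range (shape T).card).filter fun j => x ∈ shape ((delta b)^[j] T)).card)
  else none

/-- The shapes lying one box above `γ` and inside `β`. -/
def Between (γ β : Finset Λ) : Set (Finset Λ) :=
  {ε | IsLowerIdeal ε ∧ γ ⊆ ε ∧ ε ⊆ β ∧ ε.card = γ.card + 1}

/-- The local growth rule for a 2×2 square with corners `α` (top-left), `β`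
(top-right), `γ` (bottom-left), `δ` (bottom-right). -/
def LocalRule (α β γ δ : Finset Λ) : Prop :=
  δ ∈ Between γ β ∧ (δ = α ↔ Between γ β = {α})

/-- A `(p+1) × (q+1)` growth diagram (rows indexed from the top). -/
def IsGrowthDiagram (p q : ℕ) (g : ℕ → ℕ → Finset Λ) : Prop :=
  (∀ i j, i ≤ p → j ≤ q → IsLowerIdeal (g i j)) ∧
  (∀ i j, i ≤ p → j < q → g i j ⊆ g i (j+1) ∧ (g i (j+1)).card = (g i j).card + 1) ∧
  (∀ i j, i < p → j ≤ q → g (i+1) j ⊆ g i j ∧ (g i j).card = (g (i+1) j).card + 1) ∧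
  (∀ i j, i < p → j < q → LocalRule (g i j) (g i (j+1)) (g (i+1) j) (g (i+1) (j+1)))

/-- The tableau of shape `{x₁,…,x_p}` encoding a slide sequence: `x_i` gets label `p+1-i`. -/
def encodeTab (l : List Λ) : Λ → Option ℕ := fun x =>
  if x ∈ l then some (l.length - l.findIdx (fun y => decide (y = x))) else none

end

/-!
Infusion runs on states `(T, U, V)`: the box `x` of the largest label of `T` is emptied, `U`
slides into `x`, and the label is recorded in `V` at the box `g` where the slide ends. Under the
invariant `InfusionInv`, `g` is a maximal box of `T ∪ U` and its new label is the smallest one of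
`V`, so reverse infusion on the rotated state `(U', V', T')` starts at `g`, slides back along the
same path to `x` and restores `(U, V, T)`. Hence reverse infusion undoes infusion.

Conversely, infusion maps the finite set of admissible pairs with labels at most `|Λ|` into itself.
Having a left inverse there, it is injective, hence bijective on that set, so the left inverse is
also a right inverse.
-/

noncomputable section

section Pick

variable {α : Type} {f : α → ℕ} {s : Finset α}

lemma pickMinBy_mem (h : s.Nonempty) : pickMinBy f s h ∈ s :=
  (s.exists_min_image f h).choose_spec.1

lemma pickMinBy_le (h : s.Nonempty) {b : α} (hb : b ∈ s) : f (pickMinBy f s h) ≤ f b :=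
  (s.exists_min_image f h).choose_spec.2 b hb

lemma pickMaxBy_mem (h : s.Nonempty) : pickMaxBy f s h ∈ s :=
  (s.exists_max_image f h).choose_spec.1

lemma le_pickMaxBy (h : s.Nonempty) {b : α} (hb : b ∈ s) : f b ≤ f (pickMaxBy f s h) :=
  (s.exists_max_image f h).choose_spec.2 b hb

lemma pickMinBy_eq_of_lt {a : α} (ha : a ∈ s) (hlt : ∀ b ∈ s, b ≠ a → f a < f b)
    (h : s.Nonempty) : pickMinBy f s h = a :=
  by_contra fun hne => (pickMinBy_le h ha).not_gt (hlt _ (pickMinBy_mem h) hne)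

lemma pickMaxBy_eq_of_lt {a : α} (ha : a ∈ s) (hlt : ∀ b ∈ s, b ≠ a → f b < f a)
    (h : s.Nonempty) : pickMaxBy f s h = a :=
  by_contra fun hne => (le_pickMaxBy h ha).not_gt (hlt _ (pickMaxBy_mem h) hne)

lemma not_pickMaxBy_lt [Preorder α] (hf : StrictMonoOn f s) (h : s.Nonempty) {b : α}
    (hb : b ∈ s) : ¬ pickMaxBy f s h < b :=
  fun hlt => (le_pickMaxBy h hb).not_gt (hf (pickMaxBy_mem h) hb hlt)

lemma lt_pickMaxBy (hf : Set.InjOn f s) (h : s.Nonempty) {b : α} (hb : b ∈ s)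
    (hne : b ≠ pickMaxBy f s h) : f b < f (pickMaxBy f s h) :=
  (le_pickMaxBy h hb).lt_of_ne fun e => hne (hf hb (pickMaxBy_mem h) e)

end Pick

lemma dite_nonempty_choose_eq {α : Type} {s : Finset α} {a b : α} (hs : s ⊆ {a})
    (hb : a ∉ s → b = a) : (if h : s.Nonempty then h.choose else b) = a := by
  split_ifs with h
  · exact Finset.mem_singleton.1 (hs h.choose_spec)
  · exact hb fun ha => h ⟨a, ha⟩

lemma Function.iterate_eq_of_le_of_isFixedPt {α : Type*} {f : α → α} {a : α} {m n : ℕ}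
    (hmn : m ≤ n) (h : Function.IsFixedPt f (f^[m] a)) : f^[n] a = f^[m] a := by
  rw [← Nat.sub_add_cancel hmn, Function.iterate_add_apply, Function.iterate_fixed h]

lemma Set.LeftInvOn.rightInvOn_of_finite {α : Type*} {f g : α → α} {s : Set α}
    (h : Set.LeftInvOn g f s) (hf : Set.MapsTo f s s) (hs : s.Finite) : Set.RightInvOn g f s := by
  have himage := ((hs.injOn_iff_bijOn_of_mapsTo hf).1 h.injOn).image_eq
  simpa [himage] using h.rightInvOn_image

section Filling

variable {Λ : Type} {T U : Λ → Option ℕ} {x y : Λ}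

lemma lab_eq_of_eq_some {i : ℕ} (h : T x = some i) : lab T x = i := by
  simp [lab, h]

lemma lab_update {o : Option ℕ} {z : Λ} :
    lab (Function.update T x o) z = if z = x then o.getD 0 else lab T z := by
  by_cases hz : z = x <;> simp [lab, hz]

/-- The filling produced by one move of `slideAux` or `revSlideAux`. -/
def swapTab (x y : Λ) (U : Λ → Option ℕ) : Λ → Option ℕ :=
  fun z => if z = x then U y else if z = y then none else U z

lemma swapTab_eq_comp (hx : U x = none) : swapTab x y U = U ∘ Equiv.swap x y := by
  funext z
  by_cases hzx : z = x
  · simp [swapTab, hzx]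
  · by_cases hzy : z = y
    · subst hzy; simp [swapTab, hzx, hx]
    · simp [swapTab, hzx, hzy, Equiv.swap_apply_of_ne_of_ne hzx hzy]

lemma lab_swapTab_le {N : ℕ} (hU : ∀ z, lab U z ≤ N) (z : Λ) : lab (swapTab x y U) z ≤ N := by
  unfold lab swapTab
  split_ifs
  exacts [hU y, Nat.zero_le N, hU z]

variable [Fintype Λ]

lemma mem_shape : x ∈ shape T ↔ T x ≠ none := by
  simp [shape, Option.isSome_iff_ne_none]

lemma notMem_shape : x ∉ shape T ↔ T x = none := by
  simp [mem_shape]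

lemma eq_some_lab (h : x ∈ shape T) : T x = some (lab T x) := by
  obtain ⟨i, hi⟩ := Option.ne_none_iff_exists'.1 (mem_shape.1 h)
  simp [lab, hi]

lemma lab_eq_zero_of_notMem (h : x ∉ shape T) : lab T x = 0 := by
  simp [lab, notMem_shape.1 h]

lemma shape_eq_empty_iff : shape T = ∅ ↔ T = fun _ => none := by
  simp [Finset.eq_empty_iff_forall_notMem, notMem_shape, funext_iff]

lemma shape_none : shape (fun _ => none : Λ → Option ℕ) = ∅ :=
  shape_eq_empty_iff.2 rfl

lemma shape_update_none : shape (Function.update T x none) = (shape T).erase x := by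
  ext z
  by_cases hz : z = x <;> simp [mem_shape, hz]

lemma shape_update_some {i : ℕ} : shape (Function.update T x (some i)) = insert x (shape T) := by
  ext z
  by_cases hz : z = x <;> simp [mem_shape, hz]

lemma shape_swapTab (hx : U x = none) (hy : y ∈ shape U) :
    shape (swapTab x y U) = (insert x (shape U)).erase y := by
  have hxy : x ≠ y := fun e => notMem_shape.2 hx (e ▸ hy)
  ext z
  by_cases hzx : z = x
  · simp [swapTab, hzx, hxy, mem_shape.1 hy, mem_shape]
  · by_cases hzy : z = y
    · subst hzy; simp [swapTab, hzx, mem_shape]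
    · simp [swapTab, hzx, hzy, mem_shape]

lemma shape_swapTab_subset : shape (swapTab x y U) ⊆ insert x (shape U) := by
  intro z hz
  by_cases hzx : z = x
  · exact hzx ▸ Finset.mem_insert_self _ _
  · refine Finset.mem_insert_of_mem (mem_shape.2 fun hUz => mem_shape.1 hz ?_)
    by_cases hzy : z = y
    · subst hzy; simp [swapTab, hzx]
    · simp [swapTab, hzx, hzy, hUz]

lemma swapTab_swapTab (hx : U x = none) (hy : y ∈ shape U) :
    swapTab y x (swapTab x y U) = U := by
  have hxy : x ≠ y := fun e => notMem_shape.2 hx (e ▸ hy)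
  have hy' : swapTab x y U y = none := by simp [swapTab, hxy.symm]
  rw [swapTab_eq_comp hy', swapTab_eq_comp hx, Function.comp_assoc, Equiv.swap_comm,
    ← Equiv.coe_trans, Equiv.swap_swap, Equiv.coe_refl, Function.comp_id]

lemma finite_setOf_lab_le (N : ℕ) : {T : Λ → Option ℕ | ∀ z, lab T z ≤ N}.Finite := by
  have hfin : {o : Option ℕ | o.getD 0 ≤ N}.Finite :=
    ((Set.finite_Iic N).image some).insert none |>.subset <| by
      rintro (_ | i) hi
      · simp
      · simpa using hi
  exact (Set.Finite.pi fun _ => hfin).subset fun T hT => Set.mem_univ_pi.2 hT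

def maxBox (T : Λ → Option ℕ) (h : (shape T).Nonempty) : Λ := pickMaxBy (lab T) (shape T) h

lemma maxBox_mem (h : (shape T).Nonempty) : maxBox T h ∈ shape T :=
  pickMaxBy_mem h

lemma shape_update_maxBox {V : Λ → Option ℕ} (h : (shape T).Nonempty) (g : Λ) :
    shape (Function.update V g (T (maxBox T h))) = insert g (shape V) := by
  rw [eq_some_lab (maxBox_mem h), shape_update_some]

end Filling

lemma IsLowerIdeal.erase {Λ : Type} [PartialOrder Λ] {S : Finset Λ} (hS : IsLowerIdeal S)
    {g : Λ} (hg : ∀ z ∈ S, ¬ g < z) : IsLowerIdeal (S.erase g) := by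
  intro a ha b hba
  rw [Finset.mem_erase] at ha ⊢
  exact ⟨fun hbg => hg a ha.2 ((hbg ▸ hba).lt_of_ne fun e => ha.1 e.symm), hS a ha.2 b hba⟩

variable {Λ : Type} [Fintype Λ] [PartialOrder Λ]

structure IsIncreasing (T : Λ → Option ℕ) : Prop where
  strictMonoOn : StrictMonoOn (lab T) (shape T)
  injOn : Set.InjOn (lab T) (shape T)

section IsIncreasing

variable {T U V : Λ → Option ℕ}

lemma IsStandard.isIncreasing (hT : IsStandard T) : IsIncreasing T where
  strictMonoOn a ha b hb hab := hT.2.2.2 a b ha hb hab _ _ (eq_some_lab ha) (eq_some_lab hb)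
  injOn a ha b hb hab := by
    obtain ⟨i, hai, hi1, hi2⟩ := hT.2.2.1 a ha
    obtain ⟨c, -, hc⟩ := hT.2.1 i hi1 hi2
    rw [lab_eq_of_eq_some hai] at hab
    rw [hc a hai, hc b ((eq_some_lab hb).trans (by rw [← hab]))]

lemma IsStandard.lab_le_card (hT : IsStandard T) (z : Λ) : lab T z ≤ Fintype.card Λ := by
  by_cases hz : z ∈ shape T
  · obtain ⟨i, hi, -, hle⟩ := hT.2.2.1 z hz
    rw [lab_eq_of_eq_some hi]
    exact hle.trans (Finset.card_le_univ _)
  · simp [lab_eq_zero_of_notMem hz]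

lemma isIncreasing_none : IsIncreasing (fun _ => none : Λ → Option ℕ) where
  strictMonoOn a ha := by simp [mem_shape] at ha
  injOn a ha := by simp [mem_shape] at ha

lemma IsIncreasing.update_none (hT : IsIncreasing T) (x : Λ) :
    IsIncreasing (Function.update T x none) := by
  have hlab : ∀ z ∈ shape (Function.update T x none),
      lab (Function.update T x none) z = lab T z :=
    fun z hz => by simp_all [lab_update, shape_update_none]
  constructor
  · intro a ha b hb hab
    rw [hlab a ha, hlab b hb]
    simp only [Finset.mem_coe, shape_update_none, Finset.mem_erase] at ha hb
    exact hT.strictMonoOn ha.2 hb.2 hab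
  · intro a ha b hb hab
    rw [hlab a ha, hlab b hb] at hab
    simp only [Finset.mem_coe, shape_update_none, Finset.mem_erase] at ha hb
    exact hT.injOn ha.2 hb.2 hab

lemma IsIncreasing.update_some (hV : IsIncreasing V) {g : Λ} {i : ℕ} (hg : V g = none)
    (hbelow : ∀ b ∈ shape V, ¬ b < g) (hlt : ∀ b ∈ shape V, i < lab V b) :
    IsIncreasing (Function.update V g (some i)) := by
  have hmem : ∀ z, z ∈ shape (Function.update V g (some i)) ↔ z = g ∨ z ∈ shape V := by
    simp [shape_update_some]
  have hne : ∀ z ∈ shape V, z ≠ g := fun z hz e => notMem_shape.2 hg (e ▸ hz)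
  constructor
  · intro a ha b hb hab
    simp only [lab_update]
    rcases (hmem a).1 ha with rfl | haV <;> rcases (hmem b).1 hb with rfl | hbV
    · exact absurd hab (lt_irrefl _)
    · simpa [hne b hbV] using hlt b hbV
    · exact absurd hab (hbelow a haV)
    · simpa [hne a haV, hne b hbV] using hV.strictMonoOn haV hbV hab
  · intro a ha b hb hab
    simp only [lab_update] at hab
    rcases (hmem a).1 ha with rfl | haV <;> rcases (hmem b).1 hb with rfl | hbV
    · rfl
    · simp [hne b hbV] at hab; exact absurd hab (hlt b hbV).ne
    · simp [hne a haV] at hab; exact absurd hab.symm (hlt a haV).ne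
    · simp [hne a haV, hne b hbV] at hab; exact hV.injOn haV hbV hab

lemma isIncreasing_swapTab (hU : IsIncreasing U) {x y : Λ} (hx : U x = none)
    (hy : y ∈ shape U) (hxy : x < y) (hmin : ∀ z ∈ shape U, x < z → z ≠ y → lab U y < lab U z) :
    IsIncreasing (swapTab x y U) := by
  have hmem : ∀ z, z ∈ shape (swapTab x y U) ↔ Equiv.swap x y z ∈ shape U := by
    simp [swapTab_eq_comp hx, mem_shape]
  have hlab : lab (swapTab x y U) = lab U ∘ Equiv.swap x y := by
    rw [swapTab_eq_comp hx]; rfl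
  have hx' : x ∉ shape U := notMem_shape.2 hx
  constructor
  · intro a ha b hb hab
    rw [Finset.mem_coe, hmem] at ha hb
    rw [hlab]
    by_cases hax : a = x
    · subst hax
      have hbx : b ≠ a := hab.ne'
      have hby : b ≠ y := by rintro rfl; simp_all
      simp only [Function.comp_apply, Equiv.swap_apply_left,
        Equiv.swap_apply_of_ne_of_ne hbx hby] at hb ⊢
      exact hmin b hb hab hby
    · have hay : a ≠ y := by rintro rfl; simp_all
      by_cases hbx : b = x
      · subst hbx
        simp only [Function.comp_apply, Equiv.swap_apply_left,
          Equiv.swap_apply_of_ne_of_ne hax hay] at ha ⊢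
        exact hU.strictMonoOn ha hy (hab.trans hxy)
      · have hby : b ≠ y := by rintro rfl; simp_all
        simp only [Function.comp_apply, Equiv.swap_apply_of_ne_of_ne hax hay,
          Equiv.swap_apply_of_ne_of_ne hbx hby] at ha hb ⊢
        exact hU.strictMonoOn ha hb hab
  · rw [hlab]
    exact hU.injOn.comp (Equiv.injective _).injOn fun z hz => (hmem z).1 hz

end IsIncreasing

section Slide

variable {U : Λ → Option ℕ} {x : Λ} {n : ℕ}

def slideNext (U : Λ → Option ℕ) (x : Λ) (h : ((shape U).filter fun y => x ⋖ y).Nonempty) : Λ :=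
  pickMinBy (lab U) _ h

/-- The box vacated at the end of the slide `slideAux n U x`. -/
def slideEnd : ℕ → (Λ → Option ℕ) → Λ → Λ
  | 0, _, x => x
  | n+1, U, x =>
    if h : ((shape U).filter fun y => x ⋖ y).Nonempty then
      slideEnd n (swapTab x (slideNext U x h) U) (slideNext U x h)
    else x

lemma slideAux_succ_of_nonempty (h : ((shape U).filter fun y => x ⋖ y).Nonempty) :
    slideAux (n + 1) U x = slideAux n (swapTab x (slideNext U x h) U) (slideNext U x h) := by
  simp only [slideAux, dif_pos h]; rfl

lemma slideAux_succ_of_not_nonempty (h : ¬ ((shape U).filter fun y => x ⋖ y).Nonempty) :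
    slideAux (n + 1) U x = U := by
  simp only [slideAux, dif_neg h]

lemma slideEnd_succ_of_nonempty (h : ((shape U).filter fun y => x ⋖ y).Nonempty) :
    slideEnd (n + 1) U x = slideEnd n (swapTab x (slideNext U x h) U) (slideNext U x h) := by
  simp only [slideEnd, dif_pos h]

lemma slideEnd_succ_of_not_nonempty (h : ¬ ((shape U).filter fun y => x ⋖ y).Nonempty) :
    slideEnd (n + 1) U x = x := by
  simp only [slideEnd, dif_neg h]

lemma revSlideAux_succ_of_nonempty (h : ((shape U).filter fun y => y ⋖ x).Nonempty) :
    revSlideAux (n + 1) U x =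
      revSlideAux n (swapTab x (pickMaxBy (lab U) _ h) U) (pickMaxBy (lab U) _ h) := by
  simp only [revSlideAux, dif_pos h]; rfl

lemma revSlideAux_of_forall_not_covBy (h : ∀ a ∈ shape U, ¬ a ⋖ x) : revSlideAux n U x = U := by
  cases n with
  | zero => rfl
  | succ n =>
    have hne : ¬ ((shape U).filter fun y => y ⋖ x).Nonempty := fun ⟨a, ha⟩ =>
      h a (Finset.mem_filter.1 ha).1 (Finset.mem_filter.1 ha).2
    simp only [revSlideAux, dif_neg hne]

lemma slideNext_mem (h : ((shape U).filter fun y => x ⋖ y).Nonempty) :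
    slideNext U x h ∈ shape U ∧ x ⋖ slideNext U x h :=
  Finset.mem_filter.1 (pickMinBy_mem h)

lemma revSlideAux_succ_swapTab (hU : StrictMonoOn (lab U) (shape U)) (hx : U x = none)
    {y : Λ} (hy : y ∈ shape U) (hxy : x ⋖ y) (m : ℕ) :
    revSlideAux (m + 1) (swapTab x y U) y = revSlideAux m U x := by
  have hne : x ≠ y := hxy.lt.ne
  have hshape := shape_swapTab hx hy
  have hxmem : x ∈ (shape (swapTab x y U)).filter fun z => z ⋖ y := by
    simp [hshape, hne, hxy]
  have hmax : ∀ c ∈ (shape (swapTab x y U)).filter (fun z => z ⋖ y), c ≠ x →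
      lab (swapTab x y U) c < lab (swapTab x y U) x := by
    intro c hc hcx
    simp only [Finset.mem_filter, hshape, Finset.mem_erase, Finset.mem_insert] at hc
    obtain ⟨⟨hcy, hcx' | hcU⟩, hcov⟩ := hc
    · exact absurd hcx' hcx
    · simpa [lab, swapTab, hcx, hcy] using hU hcU hy hcov.lt
  have hcov : ((shape (swapTab x y U)).filter fun z => z ⋖ y).Nonempty := ⟨x, hxmem⟩
  rw [revSlideAux_succ_of_nonempty hcov, pickMaxBy_eq_of_lt hxmem hmax hcov,
    swapTab_swapTab hx hy]

/-- By the last field, every box of `U` above `x` lies above a box of `U` covering `x`, so the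
entry moved by a slide into `x` is the smallest entry above `x`. -/
structure IsSlideVacancy (U : Λ → Option ℕ) (x : Λ) : Prop where
  isIncreasing : IsIncreasing U
  vacant : U x = none
  mem_of_lt_of_le : ∀ ⦃b c⦄, x < b → b ≤ c → c ∈ shape U → b ∈ shape U

lemma IsSlideVacancy.lab_slideNext_lt (hU : IsSlideVacancy U x)
    (h : ((shape U).filter fun y => x ⋖ y).Nonempty) {z : Λ} (hz : z ∈ shape U) (hxz : x < z)
    (hzy : z ≠ slideNext U x h) : lab U (slideNext U x h) < lab U z := by
  obtain ⟨c, hxc, hcz⟩ := exists_covBy_le_of_lt hxz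
  have hc : c ∈ shape U := hU.mem_of_lt_of_le hxc.lt hcz hz
  have hle : lab U (slideNext U x h) ≤ lab U c := pickMinBy_le h (Finset.mem_filter.2 ⟨hc, hxc⟩)
  rcases hcz.lt_or_eq with hcz | rfl
  · exact hle.trans_lt (hU.isIncreasing.strictMonoOn hc hz hcz)
  · exact hle.lt_of_ne fun e => hzy (hU.isIncreasing.injOn (slideNext_mem h).1 hz e).symm

lemma IsSlideVacancy.swapTab_slideNext (hU : IsSlideVacancy U x)
    (h : ((shape U).filter fun y => x ⋖ y).Nonempty) :
    IsSlideVacancy (swapTab x (slideNext U x h) U) (slideNext U x h) := by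
  obtain ⟨hy, hxy⟩ := slideNext_mem h
  have hshape := shape_swapTab hU.vacant hy
  refine ⟨isIncreasing_swapTab hU.isIncreasing hU.vacant hy hxy.lt
    fun z hz hxz hzy => hU.lab_slideNext_lt h hz hxz hzy, by simp [swapTab, hxy.lt.ne'], ?_⟩
  intro b c hyb hbc hc
  rw [hshape, Finset.mem_erase, Finset.mem_insert] at hc ⊢
  obtain ⟨-, rfl | hc⟩ := hc
  · exact absurd (hxy.lt.trans (hyb.trans_le hbc)) (lt_irrefl _)
  · exact ⟨hyb.ne', Or.inr (hU.mem_of_lt_of_le (hxy.lt.trans hyb) hbc hc)⟩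

lemma le_slideEnd : x ≤ slideEnd n U x := by
  induction n generalizing U x with
  | zero => exact le_rfl
  | succ n ih =>
    by_cases h : ((shape U).filter fun y => x ⋖ y).Nonempty
    · rw [slideEnd_succ_of_nonempty h]
      exact (slideNext_mem h).2.le.trans ih
    · rw [slideEnd_succ_of_not_nonempty h]

lemma slideEnd_mem_insert : slideEnd n U x ∈ insert x (shape U) := by
  induction n generalizing U x with
  | zero => exact Finset.mem_insert_self _ _
  | succ n ih =>
    by_cases h : ((shape U).filter fun y => x ⋖ y).Nonempty
    · rw [slideEnd_succ_of_nonempty h]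
      rcases Finset.mem_insert.1 ih with he | he
      · exact he ▸ Finset.mem_insert_of_mem (slideNext_mem h).1
      · exact shape_swapTab_subset he
    · rw [slideEnd_succ_of_not_nonempty h]
      exact Finset.mem_insert_self _ _

lemma lab_slideAux_le {N : ℕ} (hU : ∀ z, lab U z ≤ N) (z : Λ) : lab (slideAux n U x) z ≤ N := by
  induction n generalizing U x with
  | zero => exact hU z
  | succ n ih =>
    by_cases h : ((shape U).filter fun y => x ⋖ y).Nonempty
    · rw [slideAux_succ_of_nonempty h]
      exact ih (lab_swapTab_le hU)
    · rw [slideAux_succ_of_not_nonempty h]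
      exact hU z

lemma IsSlideVacancy.isIncreasing_slideAux (hU : IsSlideVacancy U x) :
    IsIncreasing (slideAux n U x) := by
  induction n generalizing U x with
  | zero => exact hU.isIncreasing
  | succ n ih =>
    by_cases h : ((shape U).filter fun y => x ⋖ y).Nonempty
    · rw [slideAux_succ_of_nonempty h]
      exact ih (hU.swapTab_slideNext h)
    · rw [slideAux_succ_of_not_nonempty h]
      exact hU.isIncreasing

lemma IsSlideVacancy.shape_slideAux (hU : IsSlideVacancy U x) :
    shape (slideAux n U x) = (insert x (shape U)).erase (slideEnd n U x) := by
  induction n generalizing U x with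
  | zero => exact (Finset.erase_insert (notMem_shape.2 hU.vacant)).symm
  | succ n ih =>
    by_cases h : ((shape U).filter fun y => x ⋖ y).Nonempty
    · rw [slideAux_succ_of_nonempty h, slideEnd_succ_of_nonempty h, ih (hU.swapTab_slideNext h),
        shape_swapTab hU.vacant (slideNext_mem h).1,
        Finset.insert_erase (Finset.mem_insert_of_mem (slideNext_mem h).1)]
    · rw [slideAux_succ_of_not_nonempty h, slideEnd_succ_of_not_nonempty h,
        Finset.erase_insert (notMem_shape.2 hU.vacant)]

lemma card_filter_lt_lt_of_lt {x y : Λ} (h : x < y) :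
    (Finset.univ.filter fun z => y < z).card < (Finset.univ.filter fun z => x < z).card :=
  Finset.card_lt_card <| Finset.ssubset_iff_of_subset (fun z hz => by
    simp only [Finset.mem_filter, Finset.mem_univ, true_and] at hz ⊢
    exact h.trans hz) |>.2 ⟨y, by simp [h]⟩

lemma not_slideEnd_covBy (hn : (Finset.univ.filter fun z => x < z).card < n) :
    ∀ w ∈ shape (slideAux n U x), ¬ slideEnd n U x ⋖ w := by
  induction n generalizing U x with
  | zero => exact absurd hn (Nat.not_lt_zero _)
  | succ n ih =>
    by_cases h : ((shape U).filter fun y => x ⋖ y).Nonempty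
    · rw [slideAux_succ_of_nonempty h, slideEnd_succ_of_nonempty h]
      exact ih ((card_filter_lt_lt_of_lt (slideNext_mem h).2.lt).trans_le (Nat.lt_succ_iff.1 hn))
    · rw [slideAux_succ_of_not_nonempty h, slideEnd_succ_of_not_nonempty h]
      exact fun w hw hxw => h ⟨w, Finset.mem_filter.2 ⟨hw, hxw⟩⟩

lemma IsSlideVacancy.exists_revSlideAux_slideAux (hU : IsSlideVacancy U x) :
    ∃ k ≤ n, ∀ m, revSlideAux (m + k) (slideAux n U x) (slideEnd n U x) = revSlideAux m U x := by
  induction n generalizing U x with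
  | zero => exact ⟨0, le_rfl, fun m => rfl⟩
  | succ n ih =>
    by_cases h : ((shape U).filter fun y => x ⋖ y).Nonempty
    · obtain ⟨k, hk, hrev⟩ := ih (hU.swapTab_slideNext h)
      refine ⟨k + 1, by omega, fun m => ?_⟩
      rw [slideAux_succ_of_nonempty h, slideEnd_succ_of_nonempty h,
        show m + (k + 1) = (m + 1) + k by omega, hrev,
        revSlideAux_succ_swapTab hU.isIncreasing.strictMonoOn hU.vacant (slideNext_mem h).1
          (slideNext_mem h).2]
    · refine ⟨0, Nat.zero_le _, fun m => ?_⟩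
      rw [slideAux_succ_of_not_nonempty h, slideEnd_succ_of_not_nonempty h]
      rfl

lemma IsSlideVacancy.revSlideAux_slideAux (hU : IsSlideVacancy U x)
    (hx : ∀ a ∈ shape U, ¬ a ⋖ x) {m : ℕ} (hnm : n ≤ m) :
    revSlideAux m (slideAux n U x) (slideEnd n U x) = U := by
  obtain ⟨k, hk, hrev⟩ := hU.exists_revSlideAux_slideAux (n := n)
  rw [show m = (m - k) + k by omega, hrev, revSlideAux_of_forall_not_covBy hx]

end Slide

section InfusionStep

variable {T U V : Λ → Option ℕ}

lemma infusionStep_of_nonempty (h : (shape T).Nonempty) :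
    infusionStep (T, U, V) =
      (Function.update T (maxBox T h) none, slideAux (Fintype.card Λ) U (maxBox T h),
        Function.update V
          (if h2 : (shape U \ shape (slideAux (Fintype.card Λ) U (maxBox T h))).Nonempty
            then h2.choose else maxBox T h)
          (T (maxBox T h))) := by
  simp only [infusionStep, dif_pos h, Prod.mk.injEq]
  refine ⟨?_, rfl, ?_⟩ <;> funext z <;> simp only [Function.update_apply] <;> rfl

lemma infusionStep_of_not_nonempty (h : ¬ (shape T).Nonempty) :
    infusionStep (T, U, V) = (T, U, V) := by
  simp only [infusionStep, dif_neg h]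

lemma revinfusionStep_of_nonempty (h : (shape U).Nonempty) :
    revinfusionStep (T, U, V) =
      (revSlideAux (Fintype.card Λ) T (pickMinBy (lab U) (shape U) h),
        Function.update U (pickMinBy (lab U) (shape U) h) none,
        Function.update V
          (if h2 : (shape T \ shape (revSlideAux (Fintype.card Λ) T
              (pickMinBy (lab U) (shape U) h))).Nonempty
            then h2.choose else pickMinBy (lab U) (shape U) h)
          (U (pickMinBy (lab U) (shape U) h))) := by
  simp only [revinfusionStep, dif_pos h, Prod.mk.injEq, true_and]
  constructor <;> funext z <;> simp only [Function.update_apply]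

lemma revinfusionStep_of_not_nonempty (h : ¬ (shape U).Nonempty) :
    revinfusionStep (T, U, V) = (T, U, V) := by
  simp only [revinfusionStep, dif_neg h]

end InfusionStep

lemma slideEnd_maxBox_mem {T U : Λ → Option ℕ} (hne : (shape T).Nonempty) {n : ℕ} :
    slideEnd n U (maxBox T hne) ∈ shape T ∪ shape U := by
  rcases Finset.mem_insert.1 (slideEnd_mem_insert (n := n) (U := U) (x := maxBox T hne))
    with h | h
  · rw [h]; exact Finset.mem_union_left _ (maxBox_mem hne)
  · exact Finset.mem_union_right _ h

/-- The state `(T, U, V)` of infusion: `T` is what is left of the inner tableau, `U` the outer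
tableau slid so far, and `V` records the labels removed from `T` at the vacated holes. The bound
`N` on all labels keeps the set of states finite. -/
structure InfusionInv (N : ℕ) (T U V : Λ → Option ℕ) : Prop where
  incT : IsIncreasing T
  incU : IsIncreasing U
  incV : IsIncreasing V
  labT_le : ∀ z, lab T z ≤ N
  labU_le : ∀ z, lab U z ≤ N
  labV_le : ∀ z, lab V z ≤ N
  disjoint : Disjoint (shape T) (shape U)
  isLowerIdeal : IsLowerIdeal (shape T ∪ shape U)
  upward : ∀ a ∈ shape U, ∀ b ∈ shape T ∪ shape U, a ≤ b → b ∈ shape U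
  disjoint_V : Disjoint (shape T ∪ shape U) (shape V)
  isLowerIdeal_V : IsLowerIdeal (shape T ∪ shape U ∪ shape V)
  labT_lt_labV : ∀ a ∈ shape T, ∀ b ∈ shape V, lab T a < lab V b

namespace InfusionInv

variable {N : ℕ} {T U V : Λ → Option ℕ}

lemma of_isStandard (hT : IsStandard T) (hU : IsStandard U)
    (hext : ShapeExtends (shape U) (shape T)) :
    InfusionInv (Fintype.card Λ) T U (fun _ => none) where
  incT := hT.isIncreasing
  incU := hU.isIncreasing
  incV := isIncreasing_none
  labT_le := hT.lab_le_card
  labU_le := hU.lab_le_card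
  labV_le _ := Nat.zero_le _
  disjoint := hext.1
  isLowerIdeal := hext.2.1
  upward := hext.2.2.2
  disjoint_V := by simp [shape_none]
  isLowerIdeal_V := by simpa [shape_none] using hext.2.1
  labT_lt_labV := by simp [shape_none]

lemma rotate (I : InfusionInv N (fun _ => none) U V) : InfusionInv N U V (fun _ => none) where
  incT := I.incU
  incU := I.incV
  incV := isIncreasing_none
  labT_le := I.labU_le
  labU_le := I.labV_le
  labV_le _ := Nat.zero_le _
  disjoint := by simpa [shape_none] using I.disjoint_V
  isLowerIdeal := by simpa [shape_none] using I.isLowerIdeal_V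
  upward a ha b hb hab := by
    have hU : IsLowerIdeal (shape U) := by simpa [shape_none] using I.isLowerIdeal
    have hdisj : Disjoint (shape U) (shape V) := by simpa [shape_none] using I.disjoint_V
    rcases Finset.mem_union.1 hb with hb | hb
    · exact absurd (hU b hb a hab) (Finset.disjoint_right.1 hdisj ha)
    · exact hb
  disjoint_V := by simp [shape_none]
  isLowerIdeal_V := by simpa [shape_none] using I.isLowerIdeal_V
  labT_lt_labV := by simp [shape_none]

lemma not_maxBox_lt (I : InfusionInv N T U V) (hne : (shape T).Nonempty) {z : Λ}
    (hz : z ∈ shape T) : ¬ maxBox T hne < z :=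
  not_pickMaxBy_lt I.incT.strictMonoOn hne hz

lemma isSlideVacancy (I : InfusionInv N T U V) (hne : (shape T).Nonempty) :
    IsSlideVacancy U (maxBox T hne) where
  isIncreasing := I.incU
  vacant := notMem_shape.1 (Finset.disjoint_left.1 I.disjoint (maxBox_mem hne))
  mem_of_lt_of_le b c hxb hbc hc := by
    rcases Finset.mem_union.1 (I.isLowerIdeal c (Finset.mem_union_right _ hc) b hbc) with hb | hb
    · exact absurd hxb (I.not_maxBox_lt hne hb)
    · exact hb

lemma not_covBy_maxBox (I : InfusionInv N T U V) (hne : (shape T).Nonempty) :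
    ∀ a ∈ shape U, ¬ a ⋖ maxBox T hne := fun a ha hcov =>
  Finset.disjoint_left.1 I.disjoint (maxBox_mem hne)
    (I.upward a ha _ (Finset.mem_union_left _ (maxBox_mem hne)) hcov.le)

lemma not_slideEnd_lt (I : InfusionInv N T U V) (hne : (shape T).Nonempty) {z : Λ}
    (hz : z ∈ shape T ∪ shape U) : ¬ slideEnd (Fintype.card Λ) U (maxBox T hne) < z := by
  set x := maxBox T hne
  set g := slideEnd (Fintype.card Λ) U x
  intro hgz
  obtain ⟨c, hgc, hcz⟩ := exists_covBy_le_of_lt hgz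
  have hxc : x < c := le_slideEnd.trans_lt hgc.lt
  have hc : c ∈ shape U := by
    rcases Finset.mem_union.1 (I.isLowerIdeal z hz c hcz) with hc | hc
    · exact absurd hxc (I.not_maxBox_lt hne hc)
    · exact hc
  refine not_slideEnd_covBy (Finset.card_lt_univ_of_notMem (x := x) (by simp)) c ?_ hgc
  rw [(I.isSlideVacancy hne).shape_slideAux]
  exact Finset.mem_erase.2 ⟨hgc.lt.ne', Finset.mem_insert_of_mem hc⟩

lemma vacant_slideEnd (I : InfusionInv N T U V) (hne : (shape T).Nonempty) :
    V (slideEnd (Fintype.card Λ) U (maxBox T hne)) = none :=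
  notMem_shape.1 (Finset.disjoint_left.1 I.disjoint_V (slideEnd_maxBox_mem hne))

lemma infusionStep_eq (I : InfusionInv N T U V) (hne : (shape T).Nonempty) :
    infusionStep (T, U, V) =
      (Function.update T (maxBox T hne) none, slideAux (Fintype.card Λ) U (maxBox T hne),
        Function.update V (slideEnd (Fintype.card Λ) U (maxBox T hne)) (T (maxBox T hne))) := by
  have hU := I.isSlideVacancy hne
  rw [infusionStep_of_nonempty hne, dite_nonempty_choose_eq]
  · intro z hz
    simp only [Finset.mem_sdiff, hU.shape_slideAux, Finset.mem_erase, Finset.mem_insert,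
      not_and, not_or] at hz
    exact Finset.mem_singleton.2 (by_contra fun h => (hz.2 h).2 hz.1)
  · intro hg
    rcases Finset.mem_insert.1 (slideEnd_mem_insert (n := Fintype.card Λ) (U := U)
      (x := maxBox T hne)) with h | h
    · exact h.symm
    · exact absurd (Finset.mem_sdiff.2 ⟨h, by simp [hU.shape_slideAux]⟩) hg

lemma shape_union_infusionStep (I : InfusionInv N T U V) (hne : (shape T).Nonempty) :
    shape (Function.update T (maxBox T hne) none) ∪
        shape (slideAux (Fintype.card Λ) U (maxBox T hne)) =
      (shape T ∪ shape U).erase (slideEnd (Fintype.card Λ) U (maxBox T hne)) := by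
  have hx := maxBox_mem hne
  have hxU : maxBox T hne ∉ shape U := Finset.disjoint_left.1 I.disjoint hx
  have hg := slideEnd_mem_insert (n := Fintype.card Λ) (U := U) (x := maxBox T hne)
  have hdisj : ∀ z ∈ shape T, z ∉ shape U := fun _ hz => Finset.disjoint_left.1 I.disjoint hz
  rw [shape_update_none, (I.isSlideVacancy hne).shape_slideAux]
  ext z
  simp only [Finset.mem_union, Finset.mem_erase, Finset.mem_insert] at hg ⊢
  grind

lemma upward_infusionStep (I : InfusionInv N T U V) (hne : (shape T).Nonempty) :
    ∀ a ∈ shape (slideAux (Fintype.card Λ) U (maxBox T hne)),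
      ∀ b ∈ shape (Function.update T (maxBox T hne) none) ∪
        shape (slideAux (Fintype.card Λ) U (maxBox T hne)),
      a ≤ b → b ∈ shape (slideAux (Fintype.card Λ) U (maxBox T hne)) := by
  intro a ha b hb hab
  rw [I.shape_union_infusionStep hne, Finset.mem_erase] at hb
  rw [(I.isSlideVacancy hne).shape_slideAux, Finset.mem_erase, Finset.mem_insert] at ha ⊢
  refine ⟨hb.1, ?_⟩
  rcases ha.2 with rfl | ha
  · rcases hab.lt_or_eq with hab | rfl
    · rcases Finset.mem_union.1 hb.2 with hbT | hbU
      · exact absurd hab (I.not_maxBox_lt hne hbT)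
      · exact Or.inr hbU
    · exact Or.inl rfl
  · exact Or.inr (I.upward a ha b hb.2 hab)

lemma infusionStep_inv (I : InfusionInv N T U V) (hne : (shape T).Nonempty) :
    InfusionInv N (Function.update T (maxBox T hne) none)
      (slideAux (Fintype.card Λ) U (maxBox T hne))
      (Function.update V (slideEnd (Fintype.card Λ) U (maxBox T hne)) (T (maxBox T hne))) := by
  set x := maxBox T hne
  set g := slideEnd (Fintype.card Λ) U x
  have hx : x ∈ shape T := maxBox_mem hne
  have hU : IsSlideVacancy U x := I.isSlideVacancy hne
  have hg : g ∈ shape T ∪ shape U := slideEnd_maxBox_mem hne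
  have hunion := I.shape_union_infusionStep hne
  have hV' : shape (Function.update V g (T x)) = insert g (shape V) := shape_update_maxBox hne g
  refine
    { incT := I.incT.update_none x
      incU := hU.isIncreasing_slideAux
      incV := ?_
      labT_le := fun z => ?_
      labU_le := lab_slideAux_le I.labU_le
      labV_le := fun z => ?_
      disjoint := ?_
      isLowerIdeal := hunion ▸ I.isLowerIdeal.erase fun z hz => I.not_slideEnd_lt hne hz
      upward := I.upward_infusionStep hne
      disjoint_V := ?_
      isLowerIdeal_V := ?_
      labT_lt_labV := ?_ }
  · rw [eq_some_lab hx]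
    exact I.incV.update_some (I.vacant_slideEnd hne)
      (fun b hb hbg => Finset.disjoint_left.1 I.disjoint_V (I.isLowerIdeal g hg b hbg.le) hb)
      (fun b hb => I.labT_lt_labV x hx b hb)
  · rw [lab_update]; split_ifs
    exacts [Nat.zero_le N, I.labT_le z]
  · rw [lab_update]; split_ifs
    exacts [I.labT_le x, I.labV_le z]
  · rw [shape_update_none, hU.shape_slideAux, Finset.disjoint_left]
    intro a ha ha'
    simp only [Finset.mem_erase, Finset.mem_insert] at ha ha'
    rcases ha'.2 with rfl | ha'
    · exact ha.1 rfl
    · exact Finset.disjoint_left.1 I.disjoint ha.2 ha'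
  · rw [hunion, hV', Finset.disjoint_insert_right]
    exact ⟨Finset.notMem_erase g _, Finset.disjoint_of_subset_left (Finset.erase_subset _ _)
      I.disjoint_V⟩
  · rw [hunion, hV', Finset.union_insert, ← Finset.insert_union, Finset.insert_erase hg]
    exact I.isLowerIdeal_V
  · intro a ha b hb
    rw [shape_update_none, Finset.mem_erase] at ha
    rw [hV', Finset.mem_insert] at hb
    rw [lab_update, if_neg ha.1, lab_update]
    split_ifs with hbg
    · exact lt_pickMaxBy I.incT.injOn hne ha.2 ha.1
    · exact I.labT_lt_labV a ha.2 b (hb.resolve_left hbg)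

lemma revinfusionStep_infusionStep (I : InfusionInv N T U V) (hne : (shape T).Nonempty) :
    revinfusionStep (slideAux (Fintype.card Λ) U (maxBox T hne),
        Function.update V (slideEnd (Fintype.card Λ) U (maxBox T hne)) (T (maxBox T hne)),
        Function.update T (maxBox T hne) none) = (U, V, T) := by
  set x := maxBox T hne
  set g := slideEnd (Fintype.card Λ) U x
  have hx : x ∈ shape T := maxBox_mem hne
  have hU : IsSlideVacancy U x := I.isSlideVacancy hne
  have hV' : shape (Function.update V g (T x)) = insert g (shape V) := shape_update_maxBox hne g
  have hgV' : g ∈ shape (Function.update V g (T x)) := hV' ▸ Finset.mem_insert_self _ _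
  have hpick : pickMinBy (lab (Function.update V g (T x))) _ ⟨g, hgV'⟩ = g := by
    refine pickMinBy_eq_of_lt hgV' (fun b hb hbg => ?_) _
    rw [hV', Finset.mem_insert] at hb
    rw [lab_update, lab_update, if_pos rfl, if_neg hbg]
    exact I.labT_lt_labV x hx b (hb.resolve_left hbg)
  have hrev : revSlideAux (Fintype.card Λ) (slideAux (Fintype.card Λ) U x) g = U :=
    hU.revSlideAux_slideAux (I.not_covBy_maxBox hne) le_rfl
  rw [revinfusionStep_of_nonempty ⟨g, hgV'⟩]
  simp only [hpick, hrev]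
  have hhole : (if h : (shape (slideAux (Fintype.card Λ) U x) \ shape U).Nonempty
      then h.choose else g) = x := by
    have hxU : x ∉ shape U := notMem_shape.2 hU.vacant
    refine dite_nonempty_choose_eq (fun z hz => ?_) (fun hxs => ?_)
    · simp only [Finset.mem_sdiff, hU.shape_slideAux, Finset.mem_erase, Finset.mem_insert] at hz
      exact Finset.mem_singleton.2 (hz.1.2.resolve_right hz.2)
    · by_contra hgx
      refine hxs (Finset.mem_sdiff.2 ⟨?_, hxU⟩)
      rw [hU.shape_slideAux]
      exact Finset.mem_erase.2 ⟨Ne.symm hgx, Finset.mem_insert_self _ _⟩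
  rw [hhole, Function.update_idem, Function.update_eq_self_iff.2 (I.vacant_slideEnd hne).symm,
    Function.update_self, Function.update_idem, Function.update_eq_self]

lemma exists_iterate_infusionStep (I : InfusionInv N T U V) {j : ℕ} (hj : j ≤ (shape T).card) :
    ∃ T' U' V', infusionStep^[j] (T, U, V) = (T', U', V') ∧ InfusionInv N T' U' V' ∧
      (shape T').card = (shape T).card - j ∧ revinfusionStep^[j] (U', V', T') = (U, V, T) := by
  induction j generalizing T U V with
  | zero => exact ⟨T, U, V, rfl, I, rfl, rfl⟩
  | succ j ih =>
    have hne : (shape T).Nonempty := Finset.card_pos.1 (by omega)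
    have hcard : (shape (Function.update T (maxBox T hne) none)).card = (shape T).card - 1 := by
      rw [shape_update_none, Finset.card_erase_of_mem (maxBox_mem hne)]
    obtain ⟨T', U', V', hrun, I', hT', hrev⟩ := ih (I.infusionStep_inv hne) (by omega)
    refine ⟨T', U', V', ?_, I', by omega, ?_⟩
    · rw [Function.iterate_succ_apply, I.infusionStep_eq hne, hrun]
    · rw [Function.iterate_succ_apply', hrev, I.revinfusionStep_infusionStep hne]

lemma exists_iterate_card (I : InfusionInv N T U V) :
    ∃ U' V', infusionStep^[Fintype.card Λ] (T, U, V) = (fun _ => none, U', V') ∧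
      InfusionInv N (fun _ => none) U' V' ∧
      revinfusionStep^[(shape T).card] (U', V', fun _ => none) = (U, V, T) := by
  obtain ⟨T', U', V', hrun, I', hT', hrev⟩ := I.exists_iterate_infusionStep le_rfl
  obtain rfl : T' = fun _ => none := shape_eq_empty_iff.1 (Finset.card_eq_zero.1 (by omega))
  have hfix : Function.IsFixedPt infusionStep (infusionStep^[(shape T).card] (T, U, V)) := by
    rw [hrun]
    exact infusionStep_of_not_nonempty (by simp [shape_none])
  refine ⟨U', V', ?_, I', hrev⟩
  rw [Function.iterate_eq_of_le_of_isFixedPt (Finset.card_le_univ _) hfix, hrun]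

end InfusionInv

def infusionDomain (N : ℕ) : Set ((Λ → Option ℕ) × (Λ → Option ℕ)) :=
  {p | InfusionInv N p.1 p.2 (fun _ => none)}

lemma leftInvOn_revinfusion_infusion (N : ℕ) :
    Set.LeftInvOn (fun p => revinfusion p.1 p.2) (fun p => infusion p.1 p.2)
      (infusionDomain (Λ := Λ) N) := by
  rintro ⟨T, U⟩ I
  obtain ⟨U', V', hrun, -, hrev⟩ := InfusionInv.exists_iterate_card I
  have hfix : Function.IsFixedPt revinfusionStep
      (revinfusionStep^[(shape T).card] (U', V', fun _ => none)) := by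
    rw [hrev]
    exact revinfusionStep_of_not_nonempty (by simp [shape_none])
  simp only [infusion, revinfusion, hrun,
    Function.iterate_eq_of_le_of_isFixedPt (Finset.card_le_univ _) hfix, hrev]

lemma mapsTo_infusion (N : ℕ) :
    Set.MapsTo (fun p => infusion p.1 p.2) (infusionDomain (Λ := Λ) N) (infusionDomain N) := by
  rintro ⟨T, U⟩ I
  obtain ⟨U', V', hrun, I', -⟩ := InfusionInv.exists_iterate_card I
  simp only [infusion, hrun]
  exact I'.rotate

lemma infusionDomain_finite (N : ℕ) : (infusionDomain (Λ := Λ) N).Finite :=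
  ((finite_setOf_lab_le N).prod (finite_setOf_lab_le N)).subset
    fun _ hp => ⟨hp.labT_le, hp.labU_le⟩

end

theorem infusion_revinfusion_inverse_general {Λ : Type} [Fintype Λ] [PartialOrder Λ]
    (T U : Λ → Option ℕ) (hT : IsStandard T) (hU : IsStandard U)
    (hext : ShapeExtends (shape U) (shape T)) :
    revinfusion (infusion T U).1 (infusion T U).2 = (T, U) ∧
    infusion (revinfusion T U).1 (revinfusion T U).2 = (T, U) := by
  have hTU : (T, U) ∈ infusionDomain (Fintype.card Λ) := InfusionInv.of_isStandard hT hU hext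
  have hinv := leftInvOn_revinfusion_infusion (Λ := Λ) (Fintype.card Λ)
  exact ⟨hinv hTU,
    hinv.rightInvOn_of_finite (mapsTo_infusion _) (infusionDomain_finite _) hTU⟩

/-- Infusion and reverse infusion are mutually inverse. -/
theorem infusion_revinfusion_inverse {Λ : Type} [Fintype Λ] [PartialOrder Λ]
    (T U : Λ → Option ℕ) (hT : IsStandard T) (hU : IsStandard U)
    (hstraight : IsLowerIdeal (shape T))
    (hext : ShapeExtends (shape U) (shape T)) :
    revinfusion (infusion T U).1 (infusion T U).2 = (T, U) ∧
    infusion (revinfusion T U).1 (revinfusion T U).2 = (T, U) :=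
  infusion_revinfusion_inverse_general T U hT hU hext
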